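/- arXiv:1411.2544 — 2 statements merged into one kernel-verified Lean document; each statement's English description precedes it below -/
import Mathlib

section
/- For every natural number m ≥ 2, there exists a simple graph G such that the Randić energy RE(G) = m. In particular, the Randić energy can be an odd integer. -/
open scoped Classical
open Polynomial

/-- The Randić matrix of a simple graph: entry `1/√(dᵢ dⱼ)` for adjacent
vertices `vᵢ ∼ vⱼ` and `0` otherwise. -/
noncomputable def randicMatrix {V : Type*} [Fintype V] (G : SimpleGraph V) : Matrix V V ℝ :=
  fun i j => if G.Adj i j then 1 / Real.sqrt ((G.degree i : ℝ) * (G.degree j : ℝ)) else 0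

/-- The Randić energy: the sum of the absolute values of the eigenvalues
of the Randić matrix. -/
noncomputable def randicEnergy {V : Type*} [Fintype V] [DecidableEq V] (G : SimpleGraph V) : ℝ :=
  if h : (randicMatrix G).IsHermitian then ∑ i, |h.eigenvalues i| else 0

/-!
The friendship graph `F_k` (`k` triangles sharing one vertex) has Randić energy `k + 1`.
Its Randić matrix `R` fixes `s = (√dᵥ)ᵥ`, as does that of every graph, and for `F_k` one has
`R² = I/4 + s sᵀ/(8k)`. An eigenvector of `R` is therefore either an eigenvector for `1` or
orthogonal to `s`, and in the latter case its eigenvalue squares to `1/4`. On `{1, ±1/2}` the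
absolute value agrees with `x ↦ (2x² + 1)/3`, so `RE = (2 tr R² + |V|)/3`, which the formula
for `R²` evaluates.
-/

open Matrix

namespace Matrix.IsHermitian

variable {n : Type*} [Fintype n] [DecidableEq n] {A : Matrix n n ℝ} (hA : A.IsHermitian)
include hA

theorem sum_eigenvalues_sq : ∑ i, hA.eigenvalues i ^ 2 = (A * A).trace := by
  have hAA : A * A = hA.eigenvectorUnitary * (diagonal hA.eigenvalues * diagonal hA.eigenvalues) *
      star (hA.eigenvectorUnitary : Matrix n n ℝ) := by
    conv_lhs => rw [hA.spectral_theorem, ← map_mul]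
    simp only [RCLike.ofReal_real_eq_id, CompTriple.comp_eq, diagonal_mul_diagonal,
      Unitary.conjStarAlgAut_apply]
  rw [hAA, trace_mul_cycle, Unitary.coe_star_mul_self, one_mul, diagonal_mul_diagonal,
    trace_diagonal]
  simp only [sq]

theorem eigenvalues_eq_one_or_sq_eq {s : n → ℝ} {a c : ℝ} (hs : A *ᵥ s = s)
    (hsq : A * A = a • 1 + c • vecMulVec s s) (i : n) :
    hA.eigenvalues i = 1 ∨ hA.eigenvalues i ^ 2 = a := by
  set μ := hA.eigenvalues i
  set v : n → ℝ := ⇑(hA.eigenvectorBasis i)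
  have hv : A *ᵥ v = μ • v := hA.mulVec_eigenvectorBasis i
  have hv0 : v ≠ 0 := fun h =>
    hA.eigenvectorBasis.orthonormal.ne_zero i (by ext j; exact congrFun h j)
  have hsA : s ᵥ* A = s := by
    rw [← mulVec_transpose, ← conjTranspose_eq_transpose_of_trivial, hA.eq, hs]
  have hdot : μ * (s ⬝ᵥ v) = s ⬝ᵥ v := by
    rw [← smul_eq_mul, ← dotProduct_smul, ← hv, dotProduct_mulVec, hsA]
  have hAAv : (μ ^ 2 - a) • v = (c * (s ⬝ᵥ v)) • s := by
    have := congrArg (· *ᵥ v) hsq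
    simp only [← mulVec_mulVec, hv, mulVec_smul, add_mulVec, smul_mulVec, one_mulVec,
      vecMulVec_mulVec, op_smul_eq_smul] at this
    rw [sub_smul, sq, mul_smul, this, mul_smul, add_sub_cancel_left]
  rcases mul_left_eq_self₀.mp hdot with hμ | hsv
  · exact Or.inl hμ
  · rw [hsv, mul_zero, zero_smul, smul_eq_zero] at hAAv
    exact Or.inr (sub_eq_zero.mp (hAAv.resolve_right hv0))

end Matrix.IsHermitian

theorem abs_eq_of_eq_one_or_sq_eq {x : ℝ} (hx : x = 1 ∨ x ^ 2 = 4⁻¹) :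
    |x| = (2 * x ^ 2 + 1) / 3 := by
  rcases hx with rfl | hx
  · norm_num
  · rw [hx]
    nlinarith [abs_nonneg x, sq_abs x]

section Randic

variable {V : Type*} [Fintype V] (G : SimpleGraph V)

theorem randicMatrix_apply (u v : V) :
    randicMatrix G u v = if G.Adj u v then (√(G.degree u))⁻¹ * (√(G.degree v))⁻¹ else 0 := by
  rw [randicMatrix, Real.sqrt_mul (Nat.cast_nonneg _), one_div, mul_inv]

theorem randicMatrix_isHermitian : (randicMatrix G).IsHermitian := by
  ext u v
  simp [randicMatrix_apply, G.adj_comm, mul_comm]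

theorem randicMatrix_mulVec_sqrt_degree :
    randicMatrix G *ᵥ (fun v => √(G.degree v)) = fun v => √(G.degree v) := by
  ext u
  simp only [mulVec, dotProduct, randicMatrix_apply, ite_mul, zero_mul]
  rw [← Finset.sum_filter, ← G.neighborFinset_eq_filter]
  calc ∑ w ∈ G.neighborFinset u, (√(G.degree u))⁻¹ * (√(G.degree w))⁻¹ * √(G.degree w)
      = ∑ w ∈ G.neighborFinset u, (√(G.degree u))⁻¹ := by
        refine Finset.sum_congr rfl fun w hw => ?_
        have : 0 < G.degree w :=
          (G.degree_pos_iff_exists_adj w).mpr ⟨u, ((G.mem_neighborFinset u w).mp hw).symm⟩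
        rw [mul_assoc, inv_mul_cancel₀ (by positivity), mul_one]
    _ = √(G.degree u) := by
        rw [Finset.sum_const, G.card_neighborFinset_eq_degree, nsmul_eq_mul, ← div_eq_mul_inv,
          Real.div_sqrt]

theorem randicMatrix_mul_self_apply (u v : V) :
    (randicMatrix G * randicMatrix G) u v =
      (∑ w, if G.Adj u w ∧ G.Adj w v then (G.degree w : ℝ)⁻¹ else 0) *
        ((√(G.degree u))⁻¹ * (√(G.degree v))⁻¹) := by
  rw [mul_apply, Finset.sum_mul]
  refine Finset.sum_congr rfl fun w _ => ?_
  have hw : (G.degree w : ℝ)⁻¹ = (√(G.degree w))⁻¹ * (√(G.degree w))⁻¹ := by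
    rw [← mul_inv, Real.mul_self_sqrt (Nat.cast_nonneg _)]
  by_cases huw : G.Adj u w <;> by_cases hwv : G.Adj w v <;>
    simp only [randicMatrix_apply, huw, hwv, hw, ↓reduceIte, and_self, and_true, and_false,
      mul_zero, zero_mul]
  ring

theorem randicMatrix_mul_self_eq_of_sum_inv_degree [DecidableEq V] {a c : ℝ}
    (hdeg : ∀ v, G.degree v ≠ 0)
    (h : ∀ u v, (∑ w, if G.Adj u w ∧ G.Adj w v then (G.degree w : ℝ)⁻¹ else 0) =
      a * (if u = v then (G.degree u : ℝ) else 0) + c * G.degree u * G.degree v) :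
    randicMatrix G * randicMatrix G =
      a • 1 + c • vecMulVec (fun v => √(G.degree v)) (fun v => √(G.degree v)) := by
  have hsq : ∀ x, √(G.degree x : ℝ) ^ 2 = G.degree x := fun x => Real.sq_sqrt (Nat.cast_nonneg _)
  have hpos : ∀ x, 0 < √(G.degree x : ℝ) := fun x =>
    Real.sqrt_pos.mpr (by exact_mod_cast Nat.pos_of_ne_zero (hdeg x))
  ext u v
  rw [randicMatrix_mul_self_apply, h]
  have := hpos u
  have := hpos v
  by_cases huv : u = v
  · subst huv
    simp only [↓reduceIte, vecMulVec, smul_of, Matrix.add_apply, Matrix.smul_apply, one_apply_eq,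
      smul_eq_mul, mul_one, of_apply, Pi.smul_apply, Nat.cast_nonneg, Real.mul_self_sqrt]
    field_simp
    rw [hsq]
    ring
  · simp only [huv, ↓reduceIte, mul_zero, zero_add, vecMulVec, smul_of, Matrix.add_apply,
      Matrix.smul_apply, ne_eq, not_false_eq_true, one_apply_ne, smul_eq_mul, of_apply,
      Pi.smul_apply]
    field_simp
    rw [hsq, hsq]

theorem randicEnergy_eq_of_randicMatrix_mul_self [DecidableEq V] {c : ℝ}
    (h : randicMatrix G * randicMatrix G =
      (4 : ℝ)⁻¹ • 1 + c • vecMulVec (fun v => √(G.degree v)) (fun v => √(G.degree v))) :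
    randicEnergy G = Fintype.card V / 2 + 2 * c / 3 * ∑ v, (G.degree v : ℝ) := by
  have hR := randicMatrix_isHermitian G
  have habs i : |hR.eigenvalues i| = (2 * hR.eigenvalues i ^ 2 + 1) / 3 :=
    abs_eq_of_eq_one_or_sq_eq <|
      hR.eigenvalues_eq_one_or_sq_eq (randicMatrix_mulVec_sqrt_degree G) h i
  have htrace : ∑ i, hR.eigenvalues i ^ 2 = Fintype.card V / 4 + c * ∑ v, (G.degree v : ℝ) := by
    simp only [hR.sum_eigenvalues_sq, h, trace_add, trace_smul, trace_one, smul_eq_mul,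
      trace_vecMulVec, dotProduct, ← sq, Nat.cast_nonneg, Real.sq_sqrt]
    ring
  rw [randicEnergy, dif_pos hR, Finset.sum_congr rfl fun i _ => habs i, ← Finset.sum_div,
    Finset.sum_add_distrib, ← Finset.mul_sum, htrace]
  simp only [Finset.sum_const, Finset.card_univ, nsmul_eq_mul, mul_one]
  ring

end Randic

/-- The centre is `none`; blade `i` is the triangle on the centre, `some (i, false)` and
`some (i, true)`. -/
def friendshipGraph (ι : Type*) : SimpleGraph (Option (ι × Bool)) where
  Adj
    | none, none => False
    | some p, some q => q = (p.1, !p.2)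
    | _, _ => True
  symm := ⟨by rintro (_ | ⟨i, b⟩) (_ | ⟨j, c⟩) h <;> simp_all⟩
  loopless := ⟨by rintro (_ | ⟨i, b⟩) h <;> simp_all⟩

section Friendship

variable {ι : Type*}

@[simp] theorem friendshipGraph_adj_none_some (p : ι × Bool) :
    (friendshipGraph ι).Adj none (some p) := trivial

@[simp] theorem friendshipGraph_adj_some_none (p : ι × Bool) :
    (friendshipGraph ι).Adj (some p) none := trivial

@[simp] theorem friendshipGraph_adj_some_some (p q : ι × Bool) :
    (friendshipGraph ι).Adj (some p) (some q) ↔ q = (p.1, !p.2) := Iff.rfl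

theorem eq_mk_fst_not_snd_comm (p q : ι × Bool) : q = (p.1, !p.2) ↔ p = (q.1, !q.2) := by
  constructor <;> rintro rfl <;> simp

variable [Fintype ι]

theorem friendshipGraph_degree_none : (friendshipGraph ι).degree none = 2 * Fintype.card ι := by
  have : (friendshipGraph ι).neighborFinset none = {none}ᶜ := by
    ext (_ | p) <;> simp
  rw [← SimpleGraph.card_neighborFinset_eq_degree, this, Finset.card_compl]
  simp [mul_comm]

theorem friendshipGraph_degree_some (p : ι × Bool) : (friendshipGraph ι).degree (some p) = 2 := by
  have : (friendshipGraph ι).neighborFinset (some p) = {none, some (p.1, !p.2)} := by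
    ext (_ | q) <;> simp
  rw [← SimpleGraph.card_neighborFinset_eq_degree, this, Finset.card_pair (by simp)]

variable [DecidableEq ι] [Nonempty ι]

theorem friendshipGraph_randicMatrix_mul_self :
    randicMatrix (friendshipGraph ι) * randicMatrix (friendshipGraph ι) =
      (4 : ℝ)⁻¹ • 1 + (8 * (Fintype.card ι : ℝ))⁻¹ •
        vecMulVec (fun v => √((friendshipGraph ι).degree v))
          (fun v => √((friendshipGraph ι).degree v)) := by
  have hk : (Fintype.card ι : ℝ) ≠ 0 := by positivity
  refine randicMatrix_mul_self_eq_of_sum_inv_degree (friendshipGraph ι) ?_ ?_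
  · rintro (_ | p) <;> simp [friendshipGraph_degree_none, friendshipGraph_degree_some]
  · rintro (_ | p) (_ | q)
    · simp only [Fintype.sum_option, SimpleGraph.irrefl, and_self, ↓reduceIte,
        friendshipGraph_adj_none_some, friendshipGraph_adj_some_none, friendshipGraph_degree_some,
        Nat.cast_ofNat, Finset.sum_const, Finset.card_univ, Fintype.card_prod, Fintype.card_bool,
        nsmul_eq_mul, Nat.cast_mul, zero_add, friendshipGraph_degree_none]
      field_simp
      ring
    · simp only [Fintype.sum_option, SimpleGraph.irrefl, friendshipGraph_adj_none_some, and_true,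
        ↓reduceIte, friendshipGraph_adj_some_some, eq_mk_fst_not_snd_comm _ q, true_and,
        friendshipGraph_degree_some, Nat.cast_ofNat, Finset.sum_ite_eq', Finset.mem_univ, zero_add,
        reduceCtorEq, friendshipGraph_degree_none, Nat.cast_mul]
      field_simp
      ring
    · simp only [ite_and, Fintype.sum_option, friendshipGraph_adj_some_none, ↓reduceIte,
        SimpleGraph.irrefl, friendshipGraph_adj_some_some, friendshipGraph_degree_some,
        Nat.cast_ofNat, Finset.sum_ite_eq', Finset.mem_univ, zero_add, reduceCtorEq, mul_zero,
        friendshipGraph_degree_none, Nat.cast_mul]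
      field_simp
      ring
    · simp only [ite_and, Fintype.sum_option, friendshipGraph_adj_some_none, ↓reduceIte,
        friendshipGraph_adj_none_some, friendshipGraph_degree_none, Nat.cast_mul, Nat.cast_ofNat,
        friendshipGraph_adj_some_some, eq_comm (a := q), friendshipGraph_degree_some,
        Finset.sum_ite_eq', Finset.mem_univ, Bool.not_not, Prod.mk.eta, Option.some.injEq, mul_ite,
        mul_zero]
      split_ifs <;> field_simp <;> ring

theorem friendshipGraph_randicEnergy :
    randicEnergy (friendshipGraph ι) = Fintype.card ι + 1 := by
  have hk : (Fintype.card ι : ℝ) ≠ 0 := by positivity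
  rw [randicEnergy_eq_of_randicMatrix_mul_self _ friendshipGraph_randicMatrix_mul_self]
  simp only [Fintype.card_option, Fintype.card_prod, Fintype.card_bool, Nat.cast_add, Nat.cast_mul,
    Nat.cast_ofNat, Nat.cast_one, Fintype.sum_option, friendshipGraph_degree_none,
    friendshipGraph_degree_some, Finset.sum_const, Finset.card_univ, nsmul_eq_mul]
  field_simp
  ring

end Friendship

theorem stmt8 (m : ℕ) (hm : 2 ≤ m) :
    ∃ (V : Type) (_ : Fintype V) (_ : DecidableEq V) (G : SimpleGraph V),
      randicEnergy G = m := by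
  obtain ⟨k, rfl⟩ : ∃ k, m = k + 1 := ⟨m - 1, by omega⟩
  have : NeZero k := ⟨by omega⟩
  refine ⟨_, inferInstance, inferInstance, friendshipGraph (Fin k), ?_⟩
  rw [friendshipGraph_randicEnergy, Fintype.card_fin, Nat.cast_succ]
end

section
/- For m, n ≥ 2 and any edge e of K_{m,n}, the Randić energy of K_{m,n} − e equals 2 + 2/√(mn). -/
open scoped Classical
open Polynomial

/-
`K_{m,n} - ab` is a blow-up of the path `P₄`: its vertices fall into the four classes
`{a}`, `Fin n ∖ {b}`, `Fin m ∖ {a}`, `{b}` (of sizes `1, n - 1, m - 1, 1`), two vertices are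
adjacent exactly when their classes are consecutive on the path, and the degree of a vertex only
depends on its class. Hence the Randić matrix factors as `P * (Q * Pᵀ)` through the class
indicator matrix `P`, and `X ^ 4 * χ(P * (Q * Pᵀ)) = X ^ (m + n) * χ(Q * (Pᵀ * P))`. The
characteristic polynomial of the `4 × 4` quotient matrix `Q * (Pᵀ * P)` is
`(X ^ 2 - 1) * (X ^ 2 - 1 / (m n))`, so the nonzero eigenvalues of the Randić matrix are
`±1` and `±1 / √(m n)`, each simple.
-/

open Matrix Polynomial Finset SimpleGraph

theorem Matrix.X_pow_mul_charpoly_submatrix {R V κ : Type*} [CommRing R] [Fintype V] [Fintype κ]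
    [DecidableEq V] [DecidableEq κ] (π : V → κ) (Q : Matrix κ κ R) :
    X ^ Fintype.card κ * (Q.submatrix π π).charpoly =
      X ^ Fintype.card V * (Q * diagonal fun k => (#{x | π x = k} : R)).charpoly := by
  set P : Matrix V κ R := of fun x k => if π x = k then 1 else 0
  have hQ : Q.submatrix π π = P * (Q * Pᵀ) := by
    ext x y
    simp [P, mul_apply]
  have hP : Pᵀ * P = diagonal fun k => (#{x | π x = k} : R) := by
    ext k l
    simp only [P, mul_apply, transpose_apply, of_apply, mul_ite, mul_one, mul_zero, ← ite_and,
      diagonal_apply]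
    split_ifs with hkl
    · simp [hkl, Finset.sum_boole]
    · exact Finset.sum_eq_zero fun x _ => if_neg fun h => hkl (h.2.symm.trans h.1)
  rw [hQ, charpoly_mul_comm', Matrix.mul_assoc, hP]

theorem Matrix.charpoly_eq_of_pathGraph_four {R : Type*} [CommRing R]
    {T : Matrix (Fin 4) (Fin 4) R} (hT : ∀ k l, ¬(pathGraph 4).Adj k l → T k l = 0) :
    T.charpoly = X ^ 4 - C (T 0 1 * T 1 0 + T 1 2 * T 2 1 + T 2 3 * T 3 2) * X ^ 2 +
      C (T 0 1 * T 1 0 * (T 2 3 * T 3 2)) := by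
  have hT' : T = !![0, T 0 1, 0, 0; T 1 0, 0, T 1 2, 0; 0, T 2 1, 0, T 2 3; 0, 0, T 3 2, 0] := by
    ext k l
    fin_cases k <;> fin_cases l <;> simp [hT, pathGraph_adj]
  rw [hT', charpoly, det_succ_row_zero]
  simp only [Nat.succ_eq_add_one, Nat.reduceAdd, Fin.isValue, det_succ_row_zero, submatrix_apply,
    Fin.succ_zero_eq_one, Fin.succAbove, submatrix_submatrix, Function.comp_apply,
    Fin.succ_one_eq_two, det_unique, Fin.default_eq_zero, Fin.reduceSucc, Fin.castSucc_zero,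
    Fin.sum_univ_succ, Fin.coe_ofNat_eq_mod, Nat.zero_mod, pow_zero, one_mul, lt_self_iff_false,
    ↓reduceIte, Fin.castSucc_one, Finset.univ_unique, Fin.val_succ, Fin.val_eq_zero, zero_add,
    pow_one, Fin.castSucc_succ, neg_mul, Fin.succ_pos, Finset.sum_neg_distrib,
    Finset.sum_singleton, not_lt_zero, Fin.reduceCastSucc, even_two, Even.neg_pow, one_pow,
    Fin.reduceLT, charmatrix_apply_eq, of_apply, cons_val', cons_val_zero, cons_val_fin_one,
    map_zero, sub_zero, cons_val_one, cons_val, ne_eq, Fin.reduceEq, not_false_eq_true,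
    charmatrix_apply_ne, mul_neg, neg_neg, neg_zero, mul_zero, add_zero, zero_mul, one_ne_zero,
    zero_ne_one, Fin.lt_one_iff, map_add, map_mul]
  ring

theorem Polynomial.sum_map_roots_eq_of_X_pow_mul_eq {R M : Type*} [CommRing R] [IsDomain R]
    [AddCommMonoid M] {f : R → M} (hf : f 0 = 0) {p q : R[X]} (hp : p ≠ 0) (hq : q ≠ 0)
    {k l : ℕ} (h : X ^ k * p = X ^ l * q) :
    (p.roots.map f).sum = (q.roots.map f).sum := by
  have := congrArg (fun r => (r.roots.map f).sum) h
  simpa [roots_mul, hp, hq, roots_X_pow, hf, Multiset.nsmul_singleton] using this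

theorem Polynomial.sum_abs_roots_X_sq_sub_one_mul_X_sq_sub_C (c : ℝ) :
    (((X ^ 2 - 1) * (X ^ 2 - C (c ^ 2)) : ℝ[X]).roots.map abs).sum = 2 + 2 * |c| := by
  have h : ((X ^ 2 - 1) * (X ^ 2 - C (c ^ 2)) : ℝ[X]) =
      (({1, -1, c, -c} : Multiset ℝ).map fun r => X - C r).prod := by
    simp only [Multiset.insert_eq_cons, Multiset.map_cons, Multiset.prod_cons,
      Multiset.map_singleton, Multiset.prod_singleton, map_pow, map_one, map_neg]
    ring
  rw [h, roots_multiset_prod_X_sub_C]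
  simp only [Multiset.insert_eq_cons, Multiset.map_cons, Multiset.sum_cons, Multiset.map_singleton,
    Multiset.sum_singleton, abs_one, abs_neg]
  ring

theorem isHermitian_randicMatrix {V : Type*} [Fintype V] (G : SimpleGraph V) :
    (randicMatrix G).IsHermitian := by
  ext x y
  simp only [conjTranspose_apply, randicMatrix, star_trivial, G.adj_comm y x, mul_comm]

theorem randicEnergy_eq_sum_abs_roots_charpoly {V : Type*} [Fintype V] [DecidableEq V]
    (G : SimpleGraph V) : randicEnergy G = ((randicMatrix G).charpoly.roots.map abs).sum := by
  rw [randicEnergy, dif_pos (isHermitian_randicMatrix G),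
    (isHermitian_randicMatrix G).roots_charpoly_eq_eigenvalues]
  simp only [RCLike.ofReal_real_eq_id, Function.id_comp, Multiset.map_map]
  rfl

section BlowUp

variable {V κ : Type*} [Fintype V] [Fintype κ] [DecidableEq κ]

noncomputable def randicMatrixOfDegrees (H : SimpleGraph κ) (δ : κ → ℕ) : Matrix κ κ ℝ :=
  of fun k l => if H.Adj k l then 1 / √((δ k : ℝ) * δ l) else 0

noncomputable def blowUpDegree (H : SimpleGraph κ) (π : V → κ) (k : κ) : ℕ :=
  ∑ l with H.Adj k l, #{x | π x = l}

noncomputable def quotientRandicMatrix (H : SimpleGraph κ) (π : V → κ) : Matrix κ κ ℝ :=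
  randicMatrixOfDegrees H (blowUpDegree H π) * diagonal fun k => (#{x | π x = k} : ℝ)

theorem randicMatrixOfDegrees_mul_diagonal_apply_mul_apply {H : SimpleGraph κ} (δ : κ → ℕ)
    (s : κ → ℝ) {k l : κ} (hkl : H.Adj k l) :
    (randicMatrixOfDegrees H δ * diagonal s) k l * (randicMatrixOfDegrees H δ * diagonal s) l k =
      s k * s l / (δ k * δ l) := by
  simp only [mul_diagonal, randicMatrixOfDegrees, of_apply, if_pos hkl, if_pos hkl.symm,
    mul_comm (δ l : ℝ)]
  field_simp
  rw [Real.sq_sqrt (by positivity)]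

variable {G : SimpleGraph V} {H : SimpleGraph κ} {π : V → κ}

theorem degree_eq_blowUpDegree (hG : ∀ x y, G.Adj x y ↔ H.Adj (π x) (π y)) (x : V) :
    G.degree x = blowUpDegree H π (π x) := by
  rw [blowUpDegree, sum_card_fiberwise_eq_card_filter, ← card_neighborFinset_eq_degree,
    neighborFinset_eq_filter]
  simp [hG]

theorem randicMatrix_eq_submatrix (hG : ∀ x y, G.Adj x y ↔ H.Adj (π x) (π y)) :
    randicMatrix G = (randicMatrixOfDegrees H (blowUpDegree H π)).submatrix π π := by
  ext x y
  simp [randicMatrix, randicMatrixOfDegrees, hG, degree_eq_blowUpDegree hG]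

theorem randicEnergy_eq_of_blowUp [DecidableEq V] (hG : ∀ x y, G.Adj x y ↔ H.Adj (π x) (π y)) :
    randicEnergy G = ((quotientRandicMatrix H π).charpoly.roots.map abs).sum := by
  rw [randicEnergy_eq_sum_abs_roots_charpoly, randicMatrix_eq_submatrix hG]
  exact sum_map_roots_eq_of_X_pow_mul_eq abs_zero (charpoly_monic _).ne_zero
    (charpoly_monic _).ne_zero (X_pow_mul_charpoly_submatrix π _)

end BlowUp

section DeletedEdge

variable {m n : ℕ}

theorem charpoly_randicMatrixOfDegrees_pathGraph_four_mul_diagonal (hm : 2 ≤ m) (hn : 2 ≤ n) :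
    (randicMatrixOfDegrees (pathGraph 4) ![n - 1, m, n, m - 1] *
      diagonal fun k => ((![1, n - 1, m - 1, 1] k : ℕ) : ℝ)).charpoly =
      (X ^ 2 - 1) * (X ^ 2 - C (1 / ((m : ℝ) * n))) := by
  set T := randicMatrixOfDegrees (pathGraph 4) ![n - 1, m, n, m - 1] *
    diagonal fun k => ((![1, n - 1, m - 1, 1] k : ℕ) : ℝ)
  have hm' : (m : ℝ) - 1 ≠ 0 := sub_ne_zero.mpr (by norm_cast; omega)
  have hn' : (n : ℝ) - 1 ≠ 0 := sub_ne_zero.mpr (by norm_cast; omega)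
  have h01 : T 0 1 * T 1 0 = 1 / m := by
    rw [randicMatrixOfDegrees_mul_diagonal_apply_mul_apply _ _ (by simp [pathGraph_adj])]
    simp only [cons_val_zero, cons_val_one, Nat.cast_one, Nat.cast_sub (by omega : 1 ≤ n)]
    field_simp
  have h12 : T 1 2 * T 2 1 = ((n : ℝ) - 1) * (m - 1) / (m * n) := by
    rw [randicMatrixOfDegrees_mul_diagonal_apply_mul_apply _ _ (by simp [pathGraph_adj])]
    simp [Nat.cast_sub (by omega : 1 ≤ n), Nat.cast_sub (by omega : 1 ≤ m)]
  have h23 : T 2 3 * T 3 2 = 1 / n := by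
    rw [randicMatrixOfDegrees_mul_diagonal_apply_mul_apply _ _ (by simp [pathGraph_adj])]
    simp only [Matrix.cons_val, Nat.cast_one, Nat.cast_sub (by omega : 1 ≤ m)]
    field_simp
  have hsum : 1 / (m : ℝ) + (n - 1) * (m - 1) / (m * n) + 1 / n = 1 + 1 / (m * n) := by
    field_simp
    ring
  rw [charpoly_eq_of_pathGraph_four fun k l hkl => by simp [T, randicMatrixOfDegrees, hkl],
    h01, h12, h23, hsum, one_div_mul_one_div, map_add, map_one]
  ring

variable (a : Fin m) (b : Fin n)

/-- The classes `{a}`, `Fin n ∖ {b}`, `Fin m ∖ {a}`, `{b}` in their order along the path `P₄`. -/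
def deletedEdgeClass : Fin m ⊕ Fin n → Fin 4 :=
  Sum.elim (fun i => if i = a then 0 else 2) (fun j => if j = b then 3 else 1)

theorem adj_deleteEdges_iff_pathGraph (x y : Fin m ⊕ Fin n) :
    ((completeBipartiteGraph (Fin m) (Fin n)).deleteEdges {s(.inl a, .inr b)}).Adj x y ↔
      (pathGraph 4).Adj (deletedEdgeClass a b x) (deletedEdgeClass a b y) := by
  rcases x with i | j <;> rcases y with i' | j' <;>
    simp only [deletedEdgeClass, Sum.elim_inl, Sum.elim_inr] <;> split_ifs <;>
    simp_all [pathGraph_adj]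

theorem card_deletedEdgeClass_fiber (k : Fin 4) :
    #{x | deletedEdgeClass a b x = k} = ![1, n - 1, m - 1, 1] k := by
  rw [Finset.card_filter, Fintype.sum_sum_type]
  fin_cases k <;> simp [deletedEdgeClass, ite_eq_iff, Finset.sum_ite, Finset.filter_ne']

theorem blowUpDegree_deletedEdgeClass (hm : 1 ≤ m) (hn : 1 ≤ n) (k : Fin 4) :
    blowUpDegree (pathGraph 4) (deletedEdgeClass a b) k = ![n - 1, m, n, m - 1] k := by
  rw [blowUpDegree, Finset.sum_filter, Fin.sum_univ_four]
  fin_cases k <;> simp [card_deletedEdgeClass_fiber, pathGraph_adj, Nat.add_sub_of_le hm,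
    Nat.sub_add_cancel hn]

theorem randicEnergy_completeBipartiteGraph_deleteEdges (hm : 2 ≤ m) (hn : 2 ≤ n) :
    randicEnergy ((completeBipartiteGraph (Fin m) (Fin n)).deleteEdges {s(.inl a, .inr b)}) =
      2 + 2 / √((m : ℝ) * n) := by
  have hsize : (fun k => (#{x | deletedEdgeClass a b x = k} : ℝ)) =
      fun k => ((![1, n - 1, m - 1, 1] k : ℕ) : ℝ) := by
    simp only [card_deletedEdgeClass_fiber]
  have hc : (1 / √((m : ℝ) * n)) ^ 2 = 1 / (m * n) := by
    rw [div_pow, Real.sq_sqrt (by positivity), one_pow]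
  rw [randicEnergy_eq_of_blowUp (adj_deleteEdges_iff_pathGraph a b), quotientRandicMatrix, hsize,
    funext (blowUpDegree_deletedEdgeClass a b (by omega) (by omega)),
    charpoly_randicMatrixOfDegrees_pathGraph_four_mul_diagonal hm hn, ← hc,
    sum_abs_roots_X_sq_sub_one_mul_X_sq_sub_C, abs_of_pos (by positivity)]
  ring

end DeletedEdge

theorem stmt19 (m n : ℕ) (hm : 2 ≤ m) (hn : 2 ≤ n) (e : Sym2 (Fin m ⊕ Fin n))
    (he : e ∈ (completeBipartiteGraph (Fin m) (Fin n)).edgeSet) :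
    randicEnergy ((completeBipartiteGraph (Fin m) (Fin n)).deleteEdges {e}) =
      2 + 2 / Real.sqrt ((m : ℝ) * n) := by
  induction e using Sym2.ind with
  | _ u v =>
    rw [mem_edgeSet, completeBipartiteGraph_adj] at he
    rcases u with a | b <;> rcases v with a' | b'
    · simp at he
    · exact randicEnergy_completeBipartiteGraph_deleteEdges a b' hm hn
    · rw [Sym2.eq_swap]
      exact randicEnergy_completeBipartiteGraph_deleteEdges a' b hm hn
    · simp at he
end
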